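/- If a planar analytic vector field (P, Q) satisfies P(x, -y) = -P(x, y) and Q(x, -y) = Q(x, y) for all (x, y), and the origin is an equilibrium whose linearization has purely imaginary nonzero eigenvalues, then the origin is a center: there exists a punctured neighborhood of the origin entirely filled with periodic orbits. -/

import Mathlib

/-!
In polar coordinates `p = r • (cos θ, sin θ)`, dividing the field by `r` (the blow-up
`V (r • u) / r`, extended to `r = 0` by the linearization) gives `r' = r · radialSpeed` and
`θ' = angularSpeed`. Reversibility kills the diagonal of the linearization, so at `r = 0` the
angular speed is `b cos² θ - a sin² θ` with `a = ∂P/∂y (0) < 0 < b = ∂Q/∂x (0)` (after reversing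
time if necessary), and it stays positive near the origin. There the orbits are the graphs of the
solutions of `dR/dθ = R · radialSpeed / angularSpeed`, whose right-hand side is `2π`-periodic
and, by reversibility, odd in `θ`. Hence `θ ↦ R (-θ)` is again a solution with the same value at
`0`, so `R` is even; then `θ ↦ R (θ + 2π)` is a solution agreeing with `R` at `-π`, so `R` is
`2π`-periodic. Moving along the graph with angular speed `θ' > 0` closes the orbit after one turn.
-/

open Real Set Filter Topology Metric
open scoped NNReal

section ODE

variable {E : Type*} [NormedAddCommGroup E] [NormedSpace ℝ E] {v : ℝ → E → E} {K C : ℝ≥0}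

theorem exists_forall_mem_Ioo_hasDerivAt_of_lipschitzWith [CompleteSpace E]
    (hlip : ∀ t, LipschitzWith K (v t))
    (hcont : ∀ x, Continuous (v · x)) (hbdd : ∀ t x, ‖v t x‖ ≤ C) (t₀ : ℝ) (x₀ : E)
    (T : ℝ≥0) : ∃ α : ℝ → E, α t₀ = x₀ ∧
      ∀ t ∈ Ioo (t₀ - T) (t₀ + T), HasDerivAt α (v t (α t)) t := by
  have hpl : IsPicardLindelof v (tmin := t₀ - T) (tmax := t₀ + T)
      ⟨t₀, by simp⟩ x₀ (C * T) 0 C K :=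
    { lipschitzOnWith := fun t _ => (hlip t).lipschitzOnWith
      continuousOn := fun x _ => (hcont x).continuousOn
      norm_le := fun t _ x _ => hbdd t x
      mul_max_le := by simp }
  obtain ⟨α, hα₀, hα⟩ := hpl.exists_eq_forall_mem_Icc_hasDerivWithinAt₀
  exact ⟨α, hα₀, fun t ht =>
    (hα t (Ioo_subset_Icc_self ht)).hasDerivAt (Icc_mem_nhds ht.1 ht.2)⟩

theorem exists_forall_hasDerivAt_of_lipschitzWith [CompleteSpace E]
    (hlip : ∀ t, LipschitzWith K (v t))
    (hcont : ∀ x, Continuous (v · x)) (hbdd : ∀ t x, ‖v t x‖ ≤ C) (t₀ : ℝ) (x₀ : E) :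
    ∃ α : ℝ → E, α t₀ = x₀ ∧ ∀ t, HasDerivAt α (v t (α t)) t := by
  choose α hα₀ hα using exists_forall_mem_Ioo_hasDerivAt_of_lipschitzWith hlip hcont hbdd t₀ x₀
  have hagree : ∀ T T' : ℝ≥0, ∀ t ∈ Ioo (t₀ - T) (t₀ + T), t ∈ Ioo (t₀ - T') (t₀ + T') →
      α T t = α T' t := by
    intro T T' t ht ht'
    set S : ℝ := min (T : ℝ) T'
    have hS : Ioo (t₀ - S) (t₀ + S) ⊆ Ioo (t₀ - T) (t₀ + T) ∩ Ioo (t₀ - T') (t₀ + T') := by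
      intro s hs
      simp only [mem_inter_iff, mem_Ioo] at hs ⊢
      constructor <;> constructor <;> linarith [min_le_left (T : ℝ) T', min_le_right (T : ℝ) T']
    have hpos : 0 < S := lt_min (by linarith [ht.1, ht.2]) (by linarith [ht'.1, ht'.2])
    refine ODE_solution_unique_of_mem_Ioo (s := fun _ => univ) (fun t _ => (hlip t).lipschitzOnWith)
      (t₀ := t₀) ⟨by linarith, by linarith⟩ (fun s hs => ⟨hα T s (hS hs).1, trivial⟩)
      (fun s hs => ⟨hα T' s (hS hs).2, trivial⟩) ((hα₀ T).trans (hα₀ T').symm) ?_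
    rcases min_choice (T : ℝ) T' with h | h <;> simp only [S, h] <;> assumption
  set T : ℝ → ℝ≥0 := fun t => ‖t - t₀‖₊ + 1
  have hmem : ∀ t, t ∈ Ioo (t₀ - T t) (t₀ + T t) := by
    intro t
    simp only [T, NNReal.coe_add, coe_nnnorm, NNReal.coe_one, Real.norm_eq_abs, mem_Ioo]
    constructor <;> linarith [neg_abs_le (t - t₀), le_abs_self (t - t₀)]
  refine ⟨fun t => α (T t) t, hα₀ _, fun t => ?_⟩
  refine (hα (T t) t (hmem t)).congr_of_eventuallyEq ?_
  filter_upwards [Ioo_mem_nhds (hmem t).1 (hmem t).2] with s hs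
  exact hagree _ _ s (hmem s) hs

theorem even_of_hasDerivAt_of_odd {α : ℝ → E} (hlip : ∀ t, LipschitzWith K (v t))
    (hodd : ∀ t x, v (-t) x = -v t x) (hα : ∀ t, HasDerivAt α (v t (α t)) t) :
    Function.Even α := by
  have hrev : ∀ t, HasDerivAt (fun t => α (-t)) (v t (α (-t))) t := fun t => by
    simpa [hodd, Function.comp_def] using (hα (-t)).scomp t (hasDerivAt_neg t)
  intro t
  exact congrFun (ODE_solution_unique_univ (s := fun _ => univ) (t₀ := 0)
    (fun t => (hlip t).lipschitzOnWith) (fun t => ⟨hrev t, trivial⟩) (fun t => ⟨hα t, trivial⟩)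
    (by simp)) t

theorem periodic_of_hasDerivAt_of_odd {α : ℝ → E} {p : ℝ} (hlip : ∀ t, LipschitzWith K (v t))
    (hodd : ∀ t x, v (-t) x = -v t x) (hper : ∀ t x, v (t + p) x = v t x)
    (hα : ∀ t, HasDerivAt α (v t (α t)) t) : Function.Periodic α p := by
  have hshift : ∀ t, HasDerivAt (fun t => α (t + p)) (v t (α (t + p))) t := fun t => by
    simpa [hper] using (hα (t + p)).comp_add_const t p
  have hmid : α (-p / 2 + p) = α (-p / 2) := by
    rw [show -p / 2 + p = -(-p / 2) by ring]
    exact even_of_hasDerivAt_of_odd hlip hodd hα _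
  intro t
  exact congrFun (ODE_solution_unique_univ (s := fun _ => univ) (t₀ := -p / 2)
    (fun t => (hlip t).lipschitzOnWith) (fun t => ⟨hshift t, trivial⟩) (fun t => ⟨hα t, trivial⟩)
    hmid) t

theorem exists_periodic_solution_of_odd [CompleteSpace E] {p : ℝ} (hp : 0 < p)
    (hlip : ∀ t, LipschitzWith K (v t))
    (hcont : ∀ x, Continuous (v · x)) (hbdd : ∀ t x, ‖v t x‖ ≤ C)
    (hodd : ∀ t x, v (-t) x = -v t x) (hper : ∀ t x, v (t + p) x = v t x)
    (hzero : ∀ t, v t 0 = 0) (t₀ : ℝ) {x₀ : E} (hx₀ : x₀ ≠ 0) :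
    ∃ α : ℝ → E, α t₀ = x₀ ∧ (∀ t, HasDerivAt α (v t (α t)) t) ∧ Function.Periodic α p ∧
      (∀ t, α t ≠ 0) ∧ ∀ t, ‖α t‖ ≤ ‖x₀‖ * exp (K * p) := by
  obtain ⟨α, hα₀, hα⟩ := exists_forall_hasDerivAt_of_lipschitzWith hlip hcont hbdd t₀ x₀
  have hαp := periodic_of_hasDerivAt_of_odd hlip hodd hper hα
  refine ⟨α, hα₀, hα, hαp, fun t ht => hx₀ ?_, fun t => ?_⟩
  · rw [← hα₀, ODE_solution_unique_univ (s := fun _ => univ) (t₀ := t) (g := fun _ => 0)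
      (fun t => (hlip t).lipschitzOnWith) (fun t => ⟨hα t, trivial⟩)
      (fun t => ⟨by simpa [hzero] using hasDerivAt_const t (0 : E), trivial⟩) ht]
  · obtain ⟨t', ht', hαt⟩ := hαp.exists_mem_Ico hp t t₀
    have hgr := dist_le_of_trajectories_ODE (g := fun _ => 0) hlip
      (fun t _ => (hα t).continuousAt.continuousWithinAt) (fun t _ => (hα t).hasDerivWithinAt)
      continuousOn_const (fun t _ => by simpa [hzero] using hasDerivWithinAt_const t _ (0 : E))
      le_rfl t' (Ico_subset_Icc_self ht')
    rw [hαt]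
    simp only [dist_zero_right, hα₀] at hgr
    refine hgr.trans (mul_le_mul_of_nonneg_left (exp_le_exp.2 ?_) (norm_nonneg _))
    exact mul_le_mul_of_nonneg_left (by linarith [ht'.2]) K.2

end ODE

theorem surjective_of_map_add_const {τ : ℝ → ℝ} (hτ : Continuous τ) (hmono : Monotone τ)
    {p T : ℝ} (hT : 0 < T) (hshift : ∀ θ, τ (θ + p) = τ θ + T) : Function.Surjective τ := by
  have hiter : ∀ (n : ℕ) θ, τ (θ + n * p) = τ θ + n * T := by
    intro n
    induction n with
    | zero => simp
    | succ n ih => intro θ; rw [Nat.cast_succ, add_one_mul, ← add_assoc, hshift, ih]; ring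
  have hunbdd : ∀ b, ∃ n : ℕ, b ≤ n * T := fun b =>
    let ⟨n, hn⟩ := exists_nat_ge (b / T); ⟨n, (div_le_iff₀ hT).1 hn⟩
  refine hτ.surjective (tendsto_atTop_atTop_of_monotone hmono fun b => ?_)
    (tendsto_atBot_atBot_of_monotone hmono fun b => ?_)
  · obtain ⟨n, hn⟩ := hunbdd (b - τ 0)
    exact ⟨0 + n * p, by rw [hiter]; linarith⟩
  · obtain ⟨n, hn⟩ := hunbdd (τ 0 - b)
    refine ⟨0 - n * p, ?_⟩
    have := hiter n (0 - n * p)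
    rw [sub_add_cancel] at this
    linarith

theorem exists_hasDerivAt_add_period {g : ℝ → ℝ} {p : ℝ} (hg : Continuous g)
    (hgp : Function.Periodic g p) (hp : 0 < p) (hpos : ∀ x, 0 < g x) (θ₀ : ℝ) :
    ∃ Θ : ℝ → ℝ, Θ 0 = θ₀ ∧ (∀ t, HasDerivAt Θ (g (Θ t)) t) ∧
      ∃ T, 0 < T ∧ ∀ t, Θ (t + T) = Θ t + p := by
  -- `Θ` will be the inverse of the time `τ θ` needed to reach the angle `θ`.
  set τ : ℝ → ℝ := fun θ => ∫ s in θ₀..θ, (g s)⁻¹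
  have hcont : Continuous fun s => (g s)⁻¹ := hg.inv₀ fun s => (hpos s).ne'
  have hτ : ∀ θ, HasDerivAt τ (g θ)⁻¹ θ := fun θ =>
    (hcont.integral_hasStrictDerivAt θ₀ θ).hasDerivAt
  have hmono : StrictMono τ := strictMono_of_deriv_pos fun θ => by
    rw [(hτ θ).deriv]; exact inv_pos.2 (hpos θ)
  set T := τ (θ₀ + p)
  have hshift : ∀ θ, τ (θ + p) = τ θ + T := fun θ =>
    (hgp.comp Inv.inv).intervalIntegral_add_eq_add θ₀ θ fun a b => hcont.intervalIntegrable a b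
  have hτ₀ : τ θ₀ = 0 := intervalIntegral.integral_same
  have hT : 0 < T := hτ₀ ▸ hmono (lt_add_of_pos_right θ₀ hp)
  set e := hmono.orderIsoOfSurjective τ <| surjective_of_map_add_const
    (continuous_iff_continuousAt.2 fun θ => (hτ θ).continuousAt) hmono.monotone hT hshift
  have he : ∀ θ, e θ = τ θ := fun _ => rfl
  refine ⟨e.symm, ?_, fun t => ?_, T, hT, fun t => ?_⟩
  · rw [e.symm_apply_eq, he, hτ₀]
  · simpa using (hτ (e.symm t)).of_local_left_inverse e.symm.continuous.continuousAt
      (inv_ne_zero (hpos _).ne') (Eventually.of_forall e.apply_symm_apply)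
  · rw [e.symm_apply_eq, he, hshift, ← he, e.apply_symm_apply]

section RayQuotient

variable {E F : Type*} [NormedAddCommGroup E] [NormedSpace ℝ E] [NormedAddCommGroup F]
  [NormedSpace ℝ F] {f : E → F} {v : E} {r s : ℝ}

noncomputable def rayQuotient (f : E → F) (v : E) (r : ℝ) : F :=
  if r = 0 then fderiv ℝ f 0 v else r⁻¹ • f (r • v)

@[simp]
theorem rayQuotient_zero : rayQuotient f v 0 = fderiv ℝ f 0 v := if_pos rfl

theorem smul_rayQuotient (hf0 : f 0 = 0) : r • rayQuotient f v r = f (r • v) := by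
  rcases eq_or_ne r 0 with rfl | hr
  · simp [hf0]
  · simp [rayQuotient, hr, smul_smul]

theorem rayQuotient_map (σ : E →L[ℝ] E) (τ : F →L[ℝ] F) (hf : DifferentiableAt ℝ f 0)
    (h : ∀ x, f (σ x) = τ (f x)) : rayQuotient f (σ v) r = τ (rayQuotient f v r) := by
  rcases eq_or_ne r 0 with rfl | hr
  · have hσ : HasFDerivAt f (fderiv ℝ f 0) (σ 0) := by simpa using hf.hasFDerivAt
    have hcomp := hσ.comp 0 σ.hasFDerivAt
    rw [show f ∘ σ = τ ∘ f from funext h] at hcomp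
    have := hcomp.unique (τ.hasFDerivAt.comp 0 hf.hasFDerivAt)
    simpa using congrArg (· v) this
  · simp only [rayQuotient, if_neg hr, ← map_smul, h]

variable [CompleteSpace F]

theorem rayQuotient_eq_integral (hf : ContDiff ℝ 1 f) (hf0 : f 0 = 0) (v : E) (r : ℝ) :
    rayQuotient f v r = ∫ τ in (0 : ℝ)..1, fderiv ℝ f ((τ * r) • v) v := by
  rcases eq_or_ne r 0 with rfl | hr
  · simp
  have hderiv : ∀ τ ∈ uIcc (0 : ℝ) 1,
      HasDerivAt (fun τ : ℝ => f ((τ * r) • v)) (r • fderiv ℝ f ((τ * r) • v) v) τ := by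
    intro τ _
    have := ((hf.differentiable one_ne_zero) ((τ * r) • v)).hasFDerivAt.comp_hasDerivAt τ
      (((hasDerivAt_id τ).mul_const r).smul_const v)
    simpa [map_smul, Function.comp_def] using this
  have hint : IntervalIntegrable (fun τ : ℝ => r • fderiv ℝ f ((τ * r) • v) v)
      MeasureTheory.volume 0 1 := by
    apply Continuous.intervalIntegrable
    have := hf.continuous_fderiv one_ne_zero
    fun_prop
  have hftc := intervalIntegral.integral_eq_sub_of_hasDerivAt hderiv hint
  rw [intervalIntegral.integral_smul] at hftc
  simp only [one_mul, zero_mul, zero_smul, hf0, sub_zero] at hftc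
  rw [rayQuotient, if_neg hr, ← hftc, smul_smul, inv_mul_cancel₀ hr, one_smul]

theorem continuous_rayQuotient (hf : ContDiff ℝ 1 f) (hf0 : f 0 = 0) :
    Continuous fun q : E × ℝ => rayQuotient f q.1 q.2 := by
  simp only [rayQuotient_eq_integral hf hf0]
  have := hf.continuous_fderiv one_ne_zero
  exact intervalIntegral.continuous_parametric_intervalIntegral_of_continuous'
    (by fun_prop) 0 1

theorem norm_rayQuotient_sub_le (hf : ContDiff ℝ 1 f) (hf0 : f 0 = 0) {ρ : ℝ} {K : ℝ≥0}
    (hK : LipschitzOnWith K (fderiv ℝ f) (closedBall 0 ρ)) (hr : ‖r • v‖ ≤ ρ)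
    (hs : ‖s • v‖ ≤ ρ) :
    ‖rayQuotient f v r - rayQuotient f v s‖ ≤ K * ‖v‖ ^ 2 * |r - s| := by
  have hcont : ∀ r : ℝ, Continuous fun τ : ℝ => fderiv ℝ f ((τ * r) • v) v := fun r => by
    have := hf.continuous_fderiv one_ne_zero
    fun_prop
  rw [rayQuotient_eq_integral hf hf0, rayQuotient_eq_integral hf hf0,
    ← intervalIntegral.integral_sub ((hcont r).intervalIntegrable 0 1)
      ((hcont s).intervalIntegrable 0 1)]
  have hmem : ∀ τ ∈ uIoc (0 : ℝ) 1, ∀ r : ℝ, ‖r • v‖ ≤ ρ → (τ * r) • v ∈ closedBall 0 ρ := by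
    intro τ hτ r hr
    rw [uIoc_of_le zero_le_one] at hτ
    rw [mem_closedBall_zero_iff, mul_smul, norm_smul, Real.norm_of_nonneg hτ.1.le]
    exact (mul_le_of_le_one_left (norm_nonneg _) hτ.2).trans hr
  refine (intervalIntegral.norm_integral_le_of_norm_le_const
    (C := K * ‖v‖ ^ 2 * |r - s|) fun τ hτ => ?_).trans_eq (by simp)
  have hτ1 : |τ| ≤ 1 := by
    rw [uIoc_of_le zero_le_one] at hτ
    exact abs_le.2 ⟨by linarith [hτ.1], hτ.2⟩
  calc ‖fderiv ℝ f ((τ * r) • v) v - fderiv ℝ f ((τ * s) • v) v‖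
      ≤ ‖fderiv ℝ f ((τ * r) • v) - fderiv ℝ f ((τ * s) • v)‖ * ‖v‖ := by
        rw [← sub_apply]; exact ContinuousLinearMap.le_opNorm _ _
    _ ≤ K * ‖(τ * r) • v - (τ * s) • v‖ * ‖v‖ := by
        gcongr; exact hK.norm_sub_le (hmem τ hτ r hr) (hmem τ hτ s hs)
    _ = K * ‖v‖ ^ 2 * (|τ| * |r - s|) := by
        rw [← sub_smul, ← mul_sub, norm_smul, Real.norm_eq_abs, abs_mul]; ring
    _ ≤ K * ‖v‖ ^ 2 * |r - s| := by
        gcongr; exact mul_le_of_le_one_left (abs_nonneg _) hτ1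

end RayQuotient

section Polar

noncomputable def unitVec (θ : ℝ) : ℝ × ℝ := (cos θ, sin θ)

noncomputable def reflect : ℝ × ℝ →L[ℝ] ℝ × ℝ :=
  (ContinuousLinearMap.id ℝ ℝ).prodMap (-ContinuousLinearMap.id ℝ ℝ)

@[simp]
theorem reflect_apply (p : ℝ × ℝ) : reflect p = (p.1, -p.2) := rfl

theorem unitVec_neg (θ : ℝ) : unitVec (-θ) = reflect (unitVec θ) := by
  simp [unitVec]

theorem unitVec_add_two_pi (θ : ℝ) : unitVec (θ + 2 * π) = unitVec θ := by
  simp [unitVec]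

theorem norm_unitVec_le (θ : ℝ) : ‖unitVec θ‖ ≤ 1 :=
  norm_prod_le_iff.2
    ⟨by simpa [unitVec] using abs_cos_le_one θ, by simpa [unitVec] using abs_sin_le_one θ⟩

theorem unitVec_ne_zero (θ : ℝ) : unitVec θ ≠ 0 := fun h => by
  have := sin_sq_add_cos_sq θ
  simp_all [unitVec, Prod.ext_iff]

theorem continuous_unitVec : Continuous unitVec := by
  unfold unitVec; fun_prop

theorem hasDerivAt_unitVec (θ : ℝ) : HasDerivAt unitVec (-sin θ, cos θ) θ :=
  (hasDerivAt_cos θ).prodMk (hasDerivAt_sin θ)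

theorem exists_eq_smul_unitVec (p : ℝ × ℝ) : ∃ r θ, |r| ≤ 2 * ‖p‖ ∧ p = r • unitVec θ := by
  set z : ℂ := ⟨p.1, p.2⟩
  refine ⟨‖z‖, Complex.arg z, ?_, ?_⟩
  · rw [abs_norm]
    refine (Complex.norm_le_abs_re_add_abs_im z).trans ?_
    have h1 : |p.1| ≤ ‖p‖ := norm_fst_le p
    have h2 : |p.2| ≤ ‖p‖ := norm_snd_le p
    simp only [z]; linarith
  · ext
    · simp only [Prod.smul_fst, unitVec, smul_eq_mul, Complex.norm_mul_cos_arg]; rfl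
    · simp only [Prod.smul_snd, unitVec, smul_eq_mul, Complex.norm_mul_sin_arg]; rfl

theorem abs_cos_mul_add_sin_mul_le (θ x y : ℝ) : |cos θ * x + sin θ * y| ≤ |x| + |y| := by
  refine (abs_add_le _ _).trans (add_le_add ?_ ?_) <;> rw [abs_mul]
  · exact mul_le_of_le_one_left (abs_nonneg _) (abs_cos_le_one θ)
  · exact mul_le_of_le_one_left (abs_nonneg _) (abs_sin_le_one θ)

variable {V : ℝ × ℝ → ℝ × ℝ}

noncomputable def polarBlowup (V : ℝ × ℝ → ℝ × ℝ) (θ r : ℝ) : ℝ × ℝ :=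
  rayQuotient V (unitVec θ) r

noncomputable def radialSpeed (V : ℝ × ℝ → ℝ × ℝ) (θ r : ℝ) : ℝ :=
  cos θ * (polarBlowup V θ r).1 + sin θ * (polarBlowup V θ r).2

noncomputable def angularSpeed (V : ℝ × ℝ → ℝ × ℝ) (θ r : ℝ) : ℝ :=
  cos θ * (polarBlowup V θ r).2 - sin θ * (polarBlowup V θ r).1

theorem radialSpeed_smul_add_angularSpeed_smul (θ r : ℝ) :
    radialSpeed V θ r • unitVec θ + angularSpeed V θ r • (-sin θ, cos θ) =
      polarBlowup V θ r := by
  have := sin_sq_add_cos_sq θ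
  ext <;> simp only [radialSpeed, angularSpeed, unitVec, Prod.fst_add, Prod.snd_add,
    Prod.smul_fst, Prod.smul_snd, smul_eq_mul]
  · linear_combination (polarBlowup V θ r).1 * this
  · linear_combination (polarBlowup V θ r).2 * this

theorem fderiv_apply_reflect (hV : DifferentiableAt ℝ V 0)
    (hrev : ∀ p, V (reflect p) = -reflect (V p)) (v : ℝ × ℝ) :
    fderiv ℝ V 0 (reflect v) = -reflect (fderiv ℝ V 0 v) := by
  simpa using rayQuotient_map (r := 0) (v := v) reflect (-reflect) hV hrev

theorem fderiv_diag_eq_zero_of_reversible (hV : DifferentiableAt ℝ V 0)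
    (hrev : ∀ p, V (reflect p) = -reflect (V p)) :
    (fderiv ℝ V 0 (1, 0)).1 = 0 ∧ (fderiv ℝ V 0 (0, 1)).2 = 0 := by
  constructor
  · have := congrArg Prod.fst (fderiv_apply_reflect hV hrev (1, 0))
    simp only [reflect_apply, neg_zero, Prod.neg_mk, neg_neg] at this; linarith
  · have := congrArg Prod.snd (fderiv_apply_reflect hV hrev (0, 1))
    rw [reflect_apply, show ((0 : ℝ), -(1 : ℝ)) = -((0 : ℝ), (1 : ℝ)) by simp, map_neg] at this
    simp only [Prod.snd_neg, reflect_apply, Prod.neg_mk, neg_neg] at this; linarith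

theorem angularSpeed_zero (hV : DifferentiableAt ℝ V 0)
    (hrev : ∀ p, V (reflect p) = -reflect (V p)) (θ : ℝ) :
    angularSpeed V θ 0 =
      cos θ ^ 2 * (fderiv ℝ V 0 (1, 0)).2 - sin θ ^ 2 * (fderiv ℝ V 0 (0, 1)).1 := by
  obtain ⟨hx, hy⟩ := fderiv_diag_eq_zero_of_reversible hV hrev
  have hdecomp : unitVec θ = cos θ • ((1 : ℝ), (0 : ℝ)) + sin θ • ((0 : ℝ), (1 : ℝ)) := by
    simp [unitVec]
  simp only [angularSpeed, polarBlowup, rayQuotient_zero, hdecomp, map_add, map_smul,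
    Prod.fst_add, Prod.snd_add, Prod.smul_fst, Prod.smul_snd, smul_eq_mul, hx, hy]
  ring

theorem abs_radialSpeed_zero_le (θ : ℝ) : |radialSpeed V θ 0| ≤ 2 * ‖fderiv ℝ V 0‖ := by
  have hD : ‖polarBlowup V θ 0‖ ≤ ‖fderiv ℝ V 0‖ := by
    simpa [polarBlowup] using (fderiv ℝ V 0).le_opNorm_of_le (norm_unitVec_le θ)
  have h1 : |(polarBlowup V θ 0).1| ≤ ‖polarBlowup V θ 0‖ := norm_fst_le (polarBlowup V θ 0)
  have h2 : |(polarBlowup V θ 0).2| ≤ ‖polarBlowup V θ 0‖ := norm_snd_le (polarBlowup V θ 0)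
  exact (abs_cos_mul_add_sin_mul_le θ _ _).trans (by linarith)

theorem polarBlowup_neg (hV : DifferentiableAt ℝ V 0) (hrev : ∀ p, V (reflect p) = -reflect (V p))
    (θ r : ℝ) : polarBlowup V (-θ) r = -reflect (polarBlowup V θ r) := by
  rw [polarBlowup, unitVec_neg, rayQuotient_map reflect (-reflect) hV hrev]
  rfl

theorem radialSpeed_neg (hV : DifferentiableAt ℝ V 0) (hrev : ∀ p, V (reflect p) = -reflect (V p))
    (θ r : ℝ) : radialSpeed V (-θ) r = -radialSpeed V θ r := by
  simp only [radialSpeed, polarBlowup_neg hV hrev, Prod.fst_neg, Prod.snd_neg, reflect_apply,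
    cos_neg, sin_neg]
  ring

theorem angularSpeed_neg (hV : DifferentiableAt ℝ V 0) (hrev : ∀ p, V (reflect p) = -reflect (V p))
    (θ r : ℝ) : angularSpeed V (-θ) r = angularSpeed V θ r := by
  simp only [angularSpeed, polarBlowup_neg hV hrev, Prod.fst_neg, Prod.snd_neg, reflect_apply,
    cos_neg, sin_neg]
  ring

theorem radialSpeed_add_two_pi (θ r : ℝ) : radialSpeed V (θ + 2 * π) r = radialSpeed V θ r := by
  simp [radialSpeed, polarBlowup, unitVec_add_two_pi]

theorem angularSpeed_add_two_pi (θ r : ℝ) :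
    angularSpeed V (θ + 2 * π) r = angularSpeed V θ r := by
  simp [angularSpeed, polarBlowup, unitVec_add_two_pi]

theorem continuous_radialSpeed (hV : ContDiff ℝ 1 V) (hV0 : V 0 = 0) :
    Continuous fun q : ℝ × ℝ => radialSpeed V q.1 q.2 := by
  have := (continuous_rayQuotient hV hV0).comp
    ((continuous_unitVec.comp continuous_fst).prodMk continuous_snd)
  unfold radialSpeed polarBlowup
  fun_prop

theorem continuous_angularSpeed (hV : ContDiff ℝ 1 V) (hV0 : V 0 = 0) :
    Continuous fun q : ℝ × ℝ => angularSpeed V q.1 q.2 := by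
  have := (continuous_rayQuotient hV hV0).comp
    ((continuous_unitVec.comp continuous_fst).prodMk continuous_snd)
  unfold angularSpeed polarBlowup
  fun_prop

theorem norm_polarBlowup_sub_le (hV : ContDiff ℝ 1 V) (hV0 : V 0 = 0) {ρ : ℝ} {K : ℝ≥0}
    (hK : LipschitzOnWith K (fderiv ℝ V) (closedBall 0 ρ)) (θ : ℝ) {r s : ℝ} (hr : |r| ≤ ρ)
    (hs : |s| ≤ ρ) : ‖polarBlowup V θ r - polarBlowup V θ s‖ ≤ K * |r - s| := by
  have hu := norm_unitVec_le θ
  have hmem : ∀ r : ℝ, |r| ≤ ρ → ‖r • unitVec θ‖ ≤ ρ := fun r hr => by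
    rw [norm_smul, Real.norm_eq_abs]; exact (mul_le_of_le_one_right (abs_nonneg r) hu).trans hr
  refine (norm_rayQuotient_sub_le hV hV0 hK (hmem r hr) (hmem s hs)).trans ?_
  gcongr
  exact mul_le_of_le_one_right K.2 (pow_le_one₀ (norm_nonneg _) hu)

theorem abs_speed_sub_le (hV : ContDiff ℝ 1 V) (hV0 : V 0 = 0) {ρ : ℝ} {K : ℝ≥0}
    (hK : LipschitzOnWith K (fderiv ℝ V) (closedBall 0 ρ)) (θ : ℝ) {r s : ℝ} (hr : |r| ≤ ρ)
    (hs : |s| ≤ ρ) :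
    |radialSpeed V θ r - radialSpeed V θ s| ≤ 2 * K * |r - s| ∧
      |angularSpeed V θ r - angularSpeed V θ s| ≤ 2 * K * |r - s| := by
  set d := polarBlowup V θ r - polarBlowup V θ s
  have hd := norm_polarBlowup_sub_le hV hV0 hK θ hr hs
  have h1 : |d.1| ≤ K * |r - s| := (norm_fst_le d).trans hd
  have h2 : |d.2| ≤ K * |r - s| := (norm_snd_le d).trans hd
  constructor
  · calc |radialSpeed V θ r - radialSpeed V θ s| = |cos θ * d.1 + sin θ * d.2| := by
          simp only [d, radialSpeed, Prod.fst_sub, Prod.snd_sub]; ring_nf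
      _ ≤ 2 * K * |r - s| := by linarith [abs_cos_mul_add_sin_mul_le θ d.1 d.2]
  · calc |angularSpeed V θ r - angularSpeed V θ s| = |cos θ * d.2 + sin θ * -d.1| := by
          simp only [d, angularSpeed, Prod.fst_sub, Prod.snd_sub]; ring_nf
      _ ≤ 2 * K * |r - s| := by linarith [abs_cos_mul_add_sin_mul_le θ d.2 (-d.1), abs_neg d.1]

theorem exists_speed_bounds (hV : ContDiff ℝ 2 V) (hV0 : V 0 = 0)
    (hrev : ∀ p, V (reflect p) = -reflect (V p)) (ha : (fderiv ℝ V 0 (0, 1)).1 < 0)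
    (hb : 0 < (fderiv ℝ V 0 (1, 0)).2) :
    ∃ r₀ c B K, 0 < r₀ ∧ 0 < c ∧ 0 ≤ K ∧ (∀ θ r, |r| ≤ r₀ → c ≤ angularSpeed V θ r) ∧
      (∀ θ r, |r| ≤ r₀ → |radialSpeed V θ r| ≤ B) ∧
      ∀ θ r s, |r| ≤ r₀ → |s| ≤ r₀ → |radialSpeed V θ r - radialSpeed V θ s| ≤ K * |r - s| ∧
        |angularSpeed V θ r - angularSpeed V θ s| ≤ K * |r - s| := by
  have hV1 : ContDiff ℝ 1 V := hV.of_le (by norm_num)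
  obtain ⟨K, t, ht, hK⟩ :=
    ((hV.fderiv_right (m := 1) le_rfl).contDiffAt (x := 0)).exists_lipschitzOnWith
  obtain ⟨ρ, hρ, hball⟩ := nhds_basis_closedBall.mem_iff.1 ht
  have hspeed := fun θ {r s : ℝ} => abs_speed_sub_le hV1 hV0 (hK.mono hball) θ (r := r) (s := s)
  set c₀ := min (fderiv ℝ V 0 (1, 0)).2 (-(fderiv ℝ V 0 (0, 1)).1)
  have hc₀ : 0 < c₀ := lt_min hb (neg_pos.2 ha)
  have hω₀ : ∀ θ, c₀ ≤ angularSpeed V θ 0 := fun θ => by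
    rw [angularSpeed_zero (hV1.differentiable one_ne_zero 0) hrev]
    nlinarith [min_le_left (fderiv ℝ V 0 (1, 0)).2 (-(fderiv ℝ V 0 (0, 1)).1),
      min_le_right (fderiv ℝ V 0 (1, 0)).2 (-(fderiv ℝ V 0 (0, 1)).1),
      sin_sq_add_cos_sq θ, sq_nonneg (sin θ), sq_nonneg (cos θ)]
  set r₀ := min ρ (c₀ / (4 * K + 1))
  have hr₀ρ : r₀ ≤ ρ := min_le_left _ _
  have hKr₀ : 2 * K * r₀ ≤ c₀ / 2 := by
    have : r₀ * (4 * K + 1) ≤ c₀ := (le_div_iff₀ (by positivity)).1 (min_le_right _ _)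
    nlinarith
  have hspeed₀ : ∀ θ r, |r| ≤ r₀ →
      |radialSpeed V θ r - radialSpeed V θ 0| ≤ c₀ / 2 ∧
        |angularSpeed V θ r - angularSpeed V θ 0| ≤ c₀ / 2 := fun θ r hr => by
    have h := hspeed θ (hr.trans hr₀ρ) (abs_zero.trans_le hρ.le)
    have : 2 * K * |r - 0| ≤ c₀ / 2 := by rw [sub_zero]; nlinarith
    exact ⟨h.1.trans this, h.2.trans this⟩
  refine ⟨r₀, c₀ / 2, 2 * ‖fderiv ℝ V 0‖ + c₀ / 2, 2 * K, lt_min hρ (by positivity),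
    half_pos hc₀, by positivity, fun θ r hr => ?_, fun θ r hr => ?_,
    fun θ r s hr hs => hspeed θ (hr.trans hr₀ρ) (hs.trans hr₀ρ)⟩
  · linarith [(abs_le.1 (hspeed₀ θ r hr).2).1, hω₀ θ]
  · linarith [abs_sub_abs_le_abs_sub (radialSpeed V θ r) (radialSpeed V θ 0),
      (hspeed₀ θ r hr).1, abs_radialSpeed_zero_le (V := V) θ]

end Polar

noncomputable def clampAbs (r₀ r : ℝ) : ℝ := max (-r₀) (min r r₀)

theorem abs_clampAbs_le {r₀ : ℝ} (h : 0 ≤ r₀) (r : ℝ) : |clampAbs r₀ r| ≤ r₀ :=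
  abs_le.2 ⟨le_max_left _ _, max_le (by linarith) (min_le_right _ _)⟩

theorem clampAbs_of_abs_le {r₀ r : ℝ} (h : |r| ≤ r₀) : clampAbs r₀ r = r := by
  rw [clampAbs, min_eq_left (abs_le.1 h).2, max_eq_right (abs_le.1 h).1]

theorem abs_clampAbs_sub_le (r₀ r s : ℝ) : |clampAbs r₀ r - clampAbs r₀ s| ≤ |r - s| := by
  rw [clampAbs, clampAbs, max_comm, max_comm (-r₀)]
  exact (abs_max_sub_max_le_abs _ _ _).trans (abs_min_sub_min_le_max _ _ _ _ |>.trans (by simp))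

theorem abs_div_sub_div_le {a a' b b' c : ℝ} (hc : 0 < c) (hb : c ≤ b) (hb' : c ≤ b') :
    |a / b - a' / b'| ≤ |a - a'| / c + |a'| * |b - b'| / c ^ 2 := by
  have hb0 : 0 < b := hc.trans_le hb
  have hb0' : 0 < b' := hc.trans_le hb'
  have key : a / b - a' / b' = (a - a') / b + a' * (b' - b) / (b * b') := by
    field_simp; ring
  rw [key, abs_sub_comm b]
  refine (abs_add_le _ _).trans (add_le_add ?_ ?_)
  · rw [abs_div, abs_of_pos hb0]
    exact div_le_div_of_nonneg_left (abs_nonneg _) hc hb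
  · rw [abs_div, abs_mul, abs_of_pos (mul_pos hb0 hb0'), sq]
    exact div_le_div_of_nonneg_left (by positivity) (by positivity) (mul_le_mul hb hb' hc.le hb0.le)

section RadialField

variable {V : ℝ × ℝ → ℝ × ℝ} {r₀ : ℝ}

/-- `dr/dθ` along the orbits, with `r` clamped to `[-r₀, r₀]` so that it is globally Lipschitz. -/
noncomputable def radialField (V : ℝ × ℝ → ℝ × ℝ) (r₀ θ r : ℝ) : ℝ :=
  clampAbs r₀ r * radialSpeed V θ (clampAbs r₀ r) / angularSpeed V θ (clampAbs r₀ r)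

theorem radialField_of_abs_le {θ r : ℝ} (h : |r| ≤ r₀) :
    radialField V r₀ θ r = r * radialSpeed V θ r / angularSpeed V θ r := by
  rw [radialField, clampAbs_of_abs_le h]

theorem radialField_zero (hr₀ : 0 ≤ r₀) (θ : ℝ) : radialField V r₀ θ 0 = 0 := by
  simp [radialField_of_abs_le (abs_zero.trans_le hr₀)]

theorem radialField_neg (hV : DifferentiableAt ℝ V 0) (hrev : ∀ p, V (reflect p) = -reflect (V p))
    (θ r : ℝ) : radialField V r₀ (-θ) r = -radialField V r₀ θ r := by
  rw [radialField, radialField, radialSpeed_neg hV hrev, angularSpeed_neg hV hrev]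
  ring

theorem radialField_add_two_pi (θ r : ℝ) :
    radialField V r₀ (θ + 2 * π) r = radialField V r₀ θ r := by
  rw [radialField, radialField, radialSpeed_add_two_pi, angularSpeed_add_two_pi]

theorem continuous_radialField (hV : ContDiff ℝ 1 V) (hV0 : V 0 = 0) (hr₀ : 0 ≤ r₀)
    (hpos : ∀ θ r, |r| ≤ r₀ → 0 < angularSpeed V θ r) (r : ℝ) :
    Continuous fun θ => radialField V r₀ θ r := by
  have h1 := (continuous_radialSpeed hV hV0).comp (continuous_id.prodMk continuous_const)
    (f := fun θ : ℝ => (θ, clampAbs r₀ r))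
  have h2 := (continuous_angularSpeed hV hV0).comp (continuous_id.prodMk continuous_const)
    (f := fun θ : ℝ => (θ, clampAbs r₀ r))
  exact (continuous_const.mul h1).div h2 fun θ => (hpos θ _ (abs_clampAbs_le hr₀ r)).ne'

theorem abs_radialField_le {c B : ℝ} (hc : 0 < c) (hr₀ : 0 ≤ r₀)
    (hpos : ∀ θ r, |r| ≤ r₀ → c ≤ angularSpeed V θ r)
    (hB : ∀ θ r, |r| ≤ r₀ → |radialSpeed V θ r| ≤ B) (θ r : ℝ) :
    |radialField V r₀ θ r| ≤ r₀ * B / c := by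
  have hs := abs_clampAbs_le hr₀ r
  have hω := hpos θ _ hs
  have hB0 : 0 ≤ B := (abs_nonneg _).trans (hB θ _ hs)
  rw [radialField, abs_div, abs_mul, abs_of_pos (hc.trans_le hω)]
  exact div_le_div₀ (mul_nonneg hr₀ hB0) (mul_le_mul hs (hB θ _ hs) (abs_nonneg _) hr₀) hc hω

theorem exists_lipschitzWith_radialField {c B K : ℝ} (hc : 0 < c) (hr₀ : 0 ≤ r₀) (hK0 : 0 ≤ K)
    (hpos : ∀ θ r, |r| ≤ r₀ → c ≤ angularSpeed V θ r)
    (hB : ∀ θ r, |r| ≤ r₀ → |radialSpeed V θ r| ≤ B)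
    (hK : ∀ θ r s, |r| ≤ r₀ → |s| ≤ r₀ → |radialSpeed V θ r - radialSpeed V θ s| ≤ K * |r - s| ∧
      |angularSpeed V θ r - angularSpeed V θ s| ≤ K * |r - s|) :
    ∃ L, ∀ θ, LipschitzWith L (radialField V r₀ θ) := by
  have hB0 : 0 ≤ B := (abs_nonneg _).trans (hB 0 0 (abs_zero.trans_le hr₀))
  refine ⟨Real.toNNReal ((B + r₀ * K) / c + r₀ * B * K / c ^ 2), fun θ => ?_⟩
  refine LipschitzWith.of_dist_le_mul fun r r' => ?_
  set s := clampAbs r₀ r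
  set s' := clampAbs r₀ r'
  have hs := abs_clampAbs_le hr₀ r
  have hs' := abs_clampAbs_le hr₀ r'
  have hss' := abs_clampAbs_sub_le r₀ r r'
  have hnum : |s * radialSpeed V θ s - s' * radialSpeed V θ s'| ≤ (B + r₀ * K) * |s - s'| := by
    have e : s * radialSpeed V θ s - s' * radialSpeed V θ s' =
        (s - s') * radialSpeed V θ s + s' * (radialSpeed V θ s - radialSpeed V θ s') := by ring
    rw [e]
    refine (abs_add_le _ _).trans ?_
    rw [abs_mul, abs_mul]
    nlinarith [hB θ s hs, (hK θ s s' hs hs').1, abs_nonneg (s - s'), abs_nonneg s',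
      abs_nonneg (radialSpeed V θ s - radialSpeed V θ s')]
  have hnum' : |s' * radialSpeed V θ s'| ≤ r₀ * B := by
    rw [abs_mul]; exact mul_le_mul hs' (hB θ s' hs') (abs_nonneg _) hr₀
  rw [Real.dist_eq, Real.dist_eq, Real.coe_toNNReal _ (by positivity)]
  refine (abs_div_sub_div_le hc (hpos θ s hs) (hpos θ s' hs')).trans ?_
  calc |s * radialSpeed V θ s - s' * radialSpeed V θ s'| / c +
        |s' * radialSpeed V θ s'| * |angularSpeed V θ s - angularSpeed V θ s'| / c ^ 2
      ≤ (B + r₀ * K) * |s - s'| / c + r₀ * B * (K * |s - s'|) / c ^ 2 := by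
        gcongr
        exact (hK θ s s' hs hs').2
    _ = ((B + r₀ * K) / c + r₀ * B * K / c ^ 2) * |s - s'| := by ring
    _ ≤ ((B + r₀ * K) / c + r₀ * B * K / c ^ 2) * |r - r'| := by gcongr

theorem exists_radialField_bounds (hV : ContDiff ℝ 2 V) (hV0 : V 0 = 0)
    (hrev : ∀ p, V (reflect p) = -reflect (V p)) (ha : (fderiv ℝ V 0 (0, 1)).1 < 0)
    (hb : 0 < (fderiv ℝ V 0 (1, 0)).2) :
    ∃ r₀ c, 0 < r₀ ∧ 0 < c ∧ (∀ θ r, |r| ≤ r₀ → c ≤ angularSpeed V θ r) ∧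
      (∃ L, ∀ θ, LipschitzWith L (radialField V r₀ θ)) ∧
      ∃ C : ℝ≥0, ∀ θ r, ‖radialField V r₀ θ r‖ ≤ C := by
  obtain ⟨r₀, c, B, K, hr₀, hc, hK0, hpos, hB, hK⟩ := exists_speed_bounds hV hV0 hrev ha hb
  refine ⟨r₀, c, hr₀, hc, hpos, exists_lipschitzWith_radialField hc hr₀.le hK0 hpos hB hK,
    Real.toNNReal (r₀ * B / c), fun θ r => ?_⟩
  rw [Real.norm_eq_abs]
  exact (abs_radialField_le hc hr₀.le hpos hB θ r).trans (Real.le_coe_toNNReal _)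

end RadialField

def IsCenter {E : Type*} [NormedAddCommGroup E] [NormedSpace ℝ E] (V : E → E) (x₀ : E) :
    Prop :=
  ∃ U ∈ 𝓝 x₀, ∀ p ∈ U, p ≠ x₀ → ∃ γ : ℝ → E, γ 0 = p ∧ (∀ t, HasDerivAt γ (V (γ t)) t) ∧
    (∀ t, γ t ≠ x₀) ∧ ∃ T, 0 < T ∧ Function.Periodic γ T

theorem IsCenter.of_neg {E : Type*} [NormedAddCommGroup E] [NormedSpace ℝ E] {V : E → E}
    {x₀ : E} (h : IsCenter (-V) x₀) : IsCenter V x₀ := by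
  obtain ⟨U, hU, hγ⟩ := h
  refine ⟨U, hU, fun p hp hpx => ?_⟩
  obtain ⟨γ, hγ0, hγd, hγx, T, hT, hγT⟩ := hγ p hp hpx
  refine ⟨fun t => γ (-t), by simpa using hγ0, fun t => ?_, fun t => hγx _, T, hT, fun t => ?_⟩
  · simpa [Function.comp_def] using (hγd (-t)).scomp t (hasDerivAt_neg t)
  · show γ (-(t + T)) = γ (-t)
    rw [neg_add', hγT.sub_eq]

section Center

variable {V : ℝ × ℝ → ℝ × ℝ}

theorem exists_periodic_orbit_of_radialField (hV : ContDiff ℝ 1 V) (hV0 : V 0 = 0) {r₀ : ℝ}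
    (hpos : ∀ θ r, |r| ≤ r₀ → 0 < angularSpeed V θ r) {R : ℝ → ℝ}
    (hR : ∀ θ, HasDerivAt R (radialField V r₀ θ (R θ)) θ) (hRper : Function.Periodic R (2 * π))
    (hR0 : ∀ θ, R θ ≠ 0) (hRr₀ : ∀ θ, |R θ| ≤ r₀) (θ₀ : ℝ) :
    ∃ γ : ℝ → ℝ × ℝ, γ 0 = R θ₀ • unitVec θ₀ ∧ (∀ t, HasDerivAt γ (V (γ t)) t) ∧
      (∀ t, γ t ≠ 0) ∧ ∃ T, 0 < T ∧ Function.Periodic γ T := by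
  set ω := fun θ => angularSpeed V θ (R θ)
  have hωcont : Continuous ω := (continuous_angularSpeed hV hV0).comp
    (continuous_id.prodMk (continuous_iff_continuousAt.2 fun θ => (hR θ).continuousAt))
  have hωper : Function.Periodic ω (2 * π) := fun θ => by
    simp only [ω, hRper θ, angularSpeed_add_two_pi]
  obtain ⟨Θ, hΘ0, hΘ, T, hT, hΘT⟩ := exists_hasDerivAt_add_period hωcont hωper two_pi_pos
    (fun θ => hpos θ _ (hRr₀ θ)) θ₀
  refine ⟨fun t => R (Θ t) • unitVec (Θ t), by simp [hΘ0], fun t => ?_,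
    fun t => smul_ne_zero (hR0 _) (unitVec_ne_zero _), T, hT, fun t => ?_⟩
  · set θ := Θ t
    have hd := ((hR θ).scomp t (hΘ t)).smul ((hasDerivAt_unitVec θ).scomp t (hΘ t))
    refine hd.congr_deriv ?_
    have hω : ω θ ≠ 0 := (hpos θ _ (hRr₀ θ)).ne'
    show R θ • ω θ • (-sin θ, cos θ) + (ω θ • radialField V r₀ θ (R θ)) • unitVec θ =
      V (R θ • unitVec θ)
    rw [radialField_of_abs_le (hRr₀ θ), smul_eq_mul, mul_div_cancel₀ _ hω, mul_smul, ← smul_add,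
      add_comm, radialSpeed_smul_add_angularSpeed_smul]
    exact smul_rayQuotient hV0
  · simp only [hΘT, hRper (Θ t), unitVec_add_two_pi]

theorem isCenter_of_reversible (hV : ContDiff ℝ 2 V) (hV0 : V 0 = 0)
    (hrev : ∀ p, V (reflect p) = -reflect (V p)) (ha : (fderiv ℝ V 0 (0, 1)).1 < 0)
    (hb : 0 < (fderiv ℝ V 0 (1, 0)).2) : IsCenter V 0 := by
  have hV1 : ContDiff ℝ 1 V := hV.of_le (by norm_num)
  have hV' : DifferentiableAt ℝ V 0 := hV1.differentiable one_ne_zero 0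
  obtain ⟨r₀, c, hr₀, hc, hω, ⟨L, hL⟩, C, hC⟩ := exists_radialField_bounds hV hV0 hrev ha hb
  refine ⟨ball 0 (r₀ * exp (-(L * (2 * π))) / 2), ball_mem_nhds _ (by positivity),
    fun p hp hp0 => ?_⟩
  obtain ⟨ρ, θ, hρ, rfl⟩ := exists_eq_smul_unitVec p
  have hρ0 : ρ ≠ 0 := by rintro rfl; simp at hp0
  obtain ⟨R, hRθ, hR, hRper, hR0, hRle⟩ := exists_periodic_solution_of_odd two_pi_pos hL
    (continuous_radialField hV1 hV0 hr₀.le fun θ r hr => hc.trans_le (hω θ r hr)) hC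
    (radialField_neg hV' hrev) radialField_add_two_pi (radialField_zero hr₀.le) θ hρ0
  have hRr₀ : ∀ θ, |R θ| ≤ r₀ := fun θ => by
    rw [mem_ball_zero_iff] at hp
    have hexp : exp (-(L * (2 * π))) * exp (L * (2 * π)) = 1 := by rw [← exp_add]; simp
    calc |R θ| ≤ |ρ| * exp (L * (2 * π)) := hRle θ
      _ ≤ r₀ * exp (-(L * (2 * π))) * exp (L * (2 * π)) := by gcongr; linarith
      _ = r₀ := by rw [mul_assoc, hexp, mul_one]
  rw [← hRθ]
  exact exists_periodic_orbit_of_radialField hV1 hV0 (fun θ r hr => hc.trans_le (hω θ r hr)) hR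
    hRper hR0 hRr₀ θ

theorem isCenter_of_reversible_of_det_pos (hV : ContDiff ℝ 2 V) (hV0 : V 0 = 0)
    (hrev : ∀ p, V (reflect p) = -reflect (V p))
    (hdet : 0 < (fderiv ℝ V 0 (1, 0)).1 * (fderiv ℝ V 0 (0, 1)).2 -
      (fderiv ℝ V 0 (0, 1)).1 * (fderiv ℝ V 0 (1, 0)).2) : IsCenter V 0 := by
  have hV' : DifferentiableAt ℝ V 0 := hV.differentiable two_ne_zero 0
  obtain ⟨hx, hy⟩ := fderiv_diag_eq_zero_of_reversible hV' hrev
  rw [hx, hy] at hdet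
  have hb0 : (fderiv ℝ V 0 (1, 0)).2 ≠ 0 := by rintro h; simp [h] at hdet
  rcases lt_or_gt_of_ne hb0 with hb | hb
  · refine IsCenter.of_neg (isCenter_of_reversible hV.neg (by simp [hV0]) (fun p => ?_) ?_ ?_)
    · simp only [Pi.neg_apply, hrev, map_neg, neg_neg]
    · simp only [fderiv_neg, neg_apply, Prod.fst_neg, Left.neg_neg_iff]; nlinarith
    · simpa only [fderiv_neg, neg_apply, Prod.snd_neg, Left.neg_pos_iff] using hb
  · exact isCenter_of_reversible hV hV0 hrev (by nlinarith) hb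

end Center

theorem stmt_9_general (P Q : ℝ × ℝ → ℝ)
    (hPa : ∀ p : ℝ × ℝ, AnalyticAt ℝ P p) (hQa : ∀ p : ℝ × ℝ, AnalyticAt ℝ Q p)
    (hPsym : ∀ x y : ℝ, P (x, -y) = -P (x, y))
    (hQsym : ∀ x y : ℝ, Q (x, -y) = Q (x, y))
    (hP0 : P (0, 0) = 0) (hQ0 : Q (0, 0) = 0)
    (hdet : 0 < fderiv ℝ P (0, 0) (1, 0) * fderiv ℝ Q (0, 0) (0, 1) -
      fderiv ℝ P (0, 0) (0, 1) * fderiv ℝ Q (0, 0) (1, 0)) :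
    ∃ U ∈ nhds ((0, 0) : ℝ × ℝ), ∀ p ∈ U, p ≠ ((0, 0) : ℝ × ℝ) →
      ∃ γ : ℝ → ℝ × ℝ, γ 0 = p ∧
        (∀ t, HasDerivAt γ (P (γ t), Q (γ t)) t) ∧
        (∀ t, γ t ≠ ((0, 0) : ℝ × ℝ)) ∧
        ∃ T : ℝ, 0 < T ∧ ∀ t, γ (t + T) = γ t := by
  have hP : ContDiff ℝ 2 P := AnalyticOnNhd.contDiff fun p _ => hPa p
  have hQ : ContDiff ℝ 2 Q := AnalyticOnNhd.contDiff fun p _ => hQa p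
  have hDV : ∀ v, fderiv ℝ (fun p => (P p, Q p)) 0 v = (fderiv ℝ P 0 v, fderiv ℝ Q 0 v) :=
    fun v => by
      rw [((hP.differentiable two_ne_zero 0).hasFDerivAt.prodMk
        (hQ.differentiable two_ne_zero 0).hasFDerivAt).fderiv]
      rfl
  refine isCenter_of_reversible_of_det_pos (hP.prodMk hQ) (Prod.ext hP0 hQ0) (fun p => ?_) ?_
  · simp [hPsym, hQsym]
  · simp only [hDV]
    exact hdet

/-- Reversibility criterion: if an analytic planar vector field `(P, Q)` satisfies
`P(x,-y) = -P(x,y)`, `Q(x,-y) = Q(x,y)`, the origin is an equilibrium, and the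
linearization at the origin has purely imaginary nonzero eigenvalues (trace zero,
positive determinant), then the origin is a center: there is a neighborhood of the
origin in which every point other than the origin lies on a periodic orbit. -/
theorem stmt_9 (P Q : ℝ × ℝ → ℝ)
    (hPa : ∀ p : ℝ × ℝ, AnalyticAt ℝ P p) (hQa : ∀ p : ℝ × ℝ, AnalyticAt ℝ Q p)
    (hPsym : ∀ x y : ℝ, P (x, -y) = -P (x, y))
    (hQsym : ∀ x y : ℝ, Q (x, -y) = Q (x, y))
    (hP0 : P (0, 0) = 0) (hQ0 : Q (0, 0) = 0)
    (htr : fderiv ℝ P (0, 0) (1, 0) + fderiv ℝ Q (0, 0) (0, 1) = 0)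
    (hdet : 0 < fderiv ℝ P (0, 0) (1, 0) * fderiv ℝ Q (0, 0) (0, 1) -
      fderiv ℝ P (0, 0) (0, 1) * fderiv ℝ Q (0, 0) (1, 0)) :
    ∃ U ∈ nhds ((0, 0) : ℝ × ℝ), ∀ p ∈ U, p ≠ ((0, 0) : ℝ × ℝ) →
      ∃ γ : ℝ → ℝ × ℝ, γ 0 = p ∧
        (∀ t, HasDerivAt γ (P (γ t), Q (γ t)) t) ∧
        (∀ t, γ t ≠ ((0, 0) : ℝ × ℝ)) ∧
        ∃ T : ℝ, 0 < T ∧ ∀ t, γ (t + T) = γ t :=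
  stmt_9_general P Q hPa hQa hPsym hQsym hP0 hQ0 hdet
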